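/- Let T be a non-empty simplicial tree. The augmented complex 0 ← ℝ ←(ε)− A₀(T,ℝ) ←(∂)− A₁(T,ℝ) ←(∂)− A₂(T,ℝ) ← ⋯ admits a bounded contracting homotopy: there exist bounded linear maps s : ℝ → A₀(T,ℝ) and h_n : A_n(T,ℝ) → A_{n+1}(T,ℝ) (n ≥ 0) such that ε∘s = id_ℝ, ∂∘h₀ + s∘ε = id on A₀(T,ℝ), and ∂∘h_n + h_{n−1}∘∂ = id on A_n(T,ℝ) for all n ≥ 1. -/

import Mathlib

/-!
Common definitions: trees are modelled as simple graphs `G` on a vertex type `V`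
satisfying `G.IsTree`; `Seg G a b` is the geodesic segment `[a,b]` (the set of
vertices lying on the geodesic from `a` to `b`); `Aligned` tuples are those
contained in some geodesic segment; `AltChain V R n` is the module `C_n(T,R)` of
alternating `n`-chains; `chainOf x` is the class of a tuple; `alignedSub G R n`
is `A_n(T,R)`; `cnorm` is the ℓ¹-quotient norm.
-/

open Finsupp

variable {V : Type*}

/-- The geodesic segment `[a,b]`: the set of vertices on the geodesic from `a` to `b`. -/
def Seg (G : SimpleGraph V) (a b : V) : Set V :=
  {v | G.dist a v + G.dist v b = G.dist a b}

/-- A tuple of vertices is aligned if its coordinates are contained in some geodesic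
segment. -/
def Aligned (G : SimpleGraph V) {n : ℕ} (x : Fin n → V) : Prop :=
  ∃ a b : V, ∀ k, x k ∈ Seg G a b

/-- `proj a b` is the nearest-point projection onto the segment `[a,b]`. -/
def IsProj (G : SimpleGraph V) (proj : V → V → V → V) : Prop :=
  ∀ a b v : V, proj a b v ∈ Seg G a b ∧
    ∀ w ∈ Seg G a b, G.dist v (proj a b v) ≤ G.dist v w

/-- The submodule of relations defining alternating chains: each tuple is identified
with `sgn σ` times its permutation by `σ`. -/
noncomputable def altRel (V : Type*) (R : Type*) [CommRing R] (n : ℕ) :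
    Submodule R ((Fin (n + 1) → V) →₀ R) :=
  Submodule.span R {f | ∃ (x : Fin (n + 1) → V) (σ : Equiv.Perm (Fin (n + 1))),
    f = Finsupp.single x 1 - ((Equiv.Perm.sign σ : ℤ) : R) • Finsupp.single (x ∘ σ) 1}

/-- The module `C_n(T,R)` of alternating `n`-chains. -/
abbrev AltChain (V : Type*) (R : Type*) [CommRing R] (n : ℕ) :=
  ((Fin (n + 1) → V) →₀ R) ⧸ altRel V R n

/-- The alternating chain determined by an `(n+1)`-tuple. -/
noncomputable def chainOf {R : Type*} [CommRing R] {n : ℕ} (x : Fin (n + 1) → V) :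
    AltChain V R n :=
  Submodule.Quotient.mk (Finsupp.single x 1)

/-- The submodule `A_n(T,R)` of aligned chains, spanned by aligned tuples. -/
noncomputable def alignedSub (G : SimpleGraph V) (R : Type*) [CommRing R] (n : ℕ) :
    Submodule R (AltChain V R n) :=
  Submodule.span R {c | ∃ x : Fin (n + 1) → V, Aligned G x ∧ c = chainOf x}

/-- The map `φₙ` on tuples: `φₙ(x) = ∑_{i ≤ j} p_{i,j}^x(x)`, where `p_{i,j}^x` is the
nearest-point projection onto `[xᵢ,xⱼ]` applied coordinatewise. -/
noncomputable def phiTuple {R : Type*} [CommRing R] {n : ℕ} (proj : V → V → V → V)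
    (x : Fin (n + 1) → V) : AltChain V R n :=
  ∑ i : Fin (n + 1), ∑ j : Fin (n + 1),
    if i ≤ j then chainOf (fun k => proj (x i) (x j) (x k)) else 0

/-- The quotient norm on real alternating chains induced by the ℓ¹-norm. -/
noncomputable def cnorm {n : ℕ} (c : AltChain V ℝ n) : ℝ :=
  sInf {r : ℝ | ∃ f : (Fin (n + 1) → V) →₀ ℝ,
    (Submodule.Quotient.mk f : AltChain V ℝ n) = c ∧ r = ∑ x ∈ f.support, |f x|}

/-!
The homotopy is the cone construction: with `a * (x₀, …, xₙ) = (a, x₀, …, xₙ)`, put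
`h₀ c = p * c` and `hₙ₊₁ x = g * (x - hₙ ∂x)`. The identity `∂(a * c) = c - a * ∂c` turns the
homotopy identities into an induction on `n`. Taking for the apex `g` the gate of the base point
`p` to the coordinates of `x` (a point of their hull lying on every geodesic from `p` to them;
it exists in a tree because medians exist and segments are convex), every simplex produced by
`hₙ₊₁ x` lies in the hull of `x` or in some segment `[p, xᵢ]`, hence is aligned. Cones do not
increase the ℓ¹-quotient norm and `‖∂x‖ ≤ n + 2`, so `‖hₙ₊₁‖ ≤ 1 + (n + 2) ‖hₙ‖`.
-/

theorem Int.cast_units_mul_self {R : Type*} [Ring R] (u : ℤˣ) :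
    ((u : ℤ) : R) * ((u : ℤ) : R) = 1 := by
  rw [← Int.cast_mul, ← Units.val_mul, Int.units_mul_self, Units.val_one, Int.cast_one]

namespace Fin

variable {α : Type*} {n : ℕ}

theorem cons_comp_succAbove_zero (a : α) (y : Fin (n + 1) → α) :
    (cons a y : Fin (n + 2) → α) ∘ succAbove 0 = y := by
  ext t; simp

theorem cons_comp_succAbove_succ (a : α) (y : Fin (n + 1) → α) (k : Fin (n + 1)) :
    (cons a y : Fin (n + 2) → α) ∘ succAbove k.succ = cons a (y ∘ succAbove k) := by
  ext t; cases t using Fin.cases <;> simp [succ_succAbove_succ]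

end Fin

namespace AltChain

variable {R M : Type*} [CommRing R] [AddCommGroup M] [Module R M] {n : ℕ}

theorem chainOf_comp_perm (x : Fin (n + 1) → V) (σ : Equiv.Perm (Fin (n + 1))) :
    chainOf (R := R) (x ∘ σ) = ((Equiv.Perm.sign σ : ℤ) : R) • chainOf x := by
  have hrel : chainOf (R := R) x - ((Equiv.Perm.sign σ : ℤ) : R) • chainOf (x ∘ σ) = 0 :=
    (Submodule.Quotient.mk_eq_zero _).2 (Submodule.subset_span ⟨x, σ, rfl⟩)
  rw [sub_eq_zero.1 hrel, smul_smul, Int.cast_units_mul_self, one_smul]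

theorem mk_eq_sum (f : (Fin (n + 1) → V) →₀ R) :
    (Submodule.Quotient.mk f : AltChain V R n) = ∑ x ∈ f.support, f x • chainOf x := by
  conv_lhs => rw [← f.sum_single]
  simp only [Finsupp.sum, ← Submodule.mkQ_apply, map_sum]
  simp [chainOf, ← Submodule.Quotient.mk_smul]

theorem hom_ext {f g : AltChain V R n →ₗ[R] M} (h : ∀ x, f (chainOf x) = g (chainOf x)) :
    f = g :=
  Submodule.linearMap_qext _ (Finsupp.lhom_ext' fun x => LinearMap.ext_ring (h x))

noncomputable def ofAlternating (F : (Fin (n + 1) → V) → M)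
    (hF : ∀ x (σ : Equiv.Perm (Fin (n + 1))), F (x ∘ σ) = ((Equiv.Perm.sign σ : ℤ) : R) • F x) :
    AltChain V R n →ₗ[R] M :=
  (altRel V R n).liftQ (Finsupp.linearCombination R F) <| by
    rw [altRel, Submodule.span_le]
    rintro _ ⟨x, σ, rfl⟩
    simp [hF, smul_smul, Int.cast_units_mul_self]

@[simp]
theorem ofAlternating_chainOf (F : (Fin (n + 1) → V) → M) (hF) (x : Fin (n + 1) → V) :
    ofAlternating (R := R) F hF (chainOf x) = F x := by
  rw [ofAlternating, chainOf, Submodule.liftQ_apply, linearCombination_single, one_smul]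

noncomputable def cone (a : V) : AltChain V R n →ₗ[R] AltChain V R (n + 1) :=
  ofAlternating (fun x => chainOf (Fin.cons a x)) fun x (σ : Equiv.Perm (Fin (n + 1))) => by
    have : (Fin.cons a (x ∘ σ) : Fin (n + 2) → V) =
        Fin.cons a x ∘ Equiv.Perm.decomposeFin.symm (0, σ) := by
      ext k; cases k using Fin.cases <;> simp
    rw [this, chainOf_comp_perm]
    simp

@[simp]
theorem cone_chainOf (a : V) (x : Fin (n + 1) → V) :
    cone (R := R) a (chainOf x) = chainOf (Fin.cons a x) :=
  ofAlternating_chainOf _ _ x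

abbrev IsFaceBoundary (bnd : ∀ n : ℕ, AltChain V R (n + 1) →ₗ[R] AltChain V R n) : Prop :=
  ∀ (n : ℕ) (y : Fin (n + 2) → V),
    bnd n (chainOf y) = ∑ j : Fin (n + 2), ((-1 : R) ^ (j : ℕ)) • chainOf (y ∘ Fin.succAbove j)

section Boundary

open Fin

variable {bnd : ∀ n : ℕ, AltChain V R (n + 1) →ₗ[R] AltChain V R n} (hbnd : IsFaceBoundary bnd)
include hbnd

theorem bnd_cone (a : V) (c : AltChain V R (n + 1)) :
    bnd (n + 1) (cone a c) = c - cone a (bnd n c) := by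
  suffices (bnd (n + 1)).comp (cone a) = LinearMap.id - (cone a).comp (bnd n) from
    LinearMap.congr_fun this c
  refine hom_ext fun y => ?_
  simp only [LinearMap.comp_apply, LinearMap.sub_apply, LinearMap.id_apply, cone_chainOf,
    hbnd, Fin.sum_univ_succ (n := n + 2), cons_comp_succAbove_zero, cons_comp_succAbove_succ,
    map_sum, map_smul, Fin.val_zero, pow_zero, one_smul, Fin.val_succ, pow_succ, mul_neg_one,
    neg_smul, Finset.sum_neg_distrib]
  abel

theorem bnd_bnd : ∀ (n : ℕ) (c : AltChain V R (n + 2)), bnd n (bnd (n + 1) c) = 0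
  | 0, c => by
    suffices (bnd 0).comp (bnd 1) = 0 from LinearMap.congr_fun this c
    refine hom_ext fun y => ?_
    simp [hbnd, Fin.sum_univ_succ, Function.comp_def, Fin.succAbove, Fin.fin_one_eq_zero]
    abel
  | n + 1, c => by
    suffices (bnd (n + 1)).comp (bnd (n + 2)) = 0 from LinearMap.congr_fun this c
    refine hom_ext fun y => ?_
    -- every generator is a cone, and `∂∂(a * c) = a * ∂∂c`
    rw [LinearMap.comp_apply, ← Fin.cons_self_tail y, ← cone_chainOf, bnd_cone hbnd, map_sub,
      bnd_cone hbnd, bnd_bnd n, map_zero, sub_zero, sub_self, LinearMap.zero_apply]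

variable {eps : AltChain V R 0 →ₗ[R] R} (heps : ∀ x : Fin 1 → V, eps (chainOf x) = 1)
include heps

theorem bnd_zero_cone (a : V) (c : AltChain V R 0) :
    bnd 0 (cone a c) = c - eps c • chainOf (fun _ => a) := by
  suffices (bnd 0).comp (cone a) = LinearMap.id - eps.smulRight (chainOf fun _ => a) from
    LinearMap.congr_fun this c
  refine hom_ext fun y => ?_
  have hface : (cons a y : Fin 2 → V) ∘ succAbove 1 = fun _ => a := by
    ext t; fin_cases t; rfl
  simp [hbnd, Fin.sum_univ_two, heps, hface, sub_eq_add_neg]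

theorem eps_bnd_zero (c : AltChain V R 1) : eps (bnd 0 c) = 0 := by
  suffices eps.comp (bnd 0) = 0 from LinearMap.congr_fun this c
  refine hom_ext fun y => ?_
  simp [hbnd, Fin.sum_univ_two, heps]

end Boundary

end AltChain

theorem SimpleGraph.Walk.IsPath.append_of_support_inter {G : SimpleGraph V} {u v w : V}
    {p : G.Walk u v} {q : G.Walk v w} (hp : p.IsPath) (hq : q.IsPath)
    (h : ∀ x ∈ p.support, x ∈ q.support → x = v) : (p.append q).IsPath := by
  have hq' := hq.support_nodup
  rw [← SimpleGraph.Walk.cons_tail_support] at hq'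
  rw [SimpleGraph.Walk.isPath_def, SimpleGraph.Walk.support_append]
  refine hp.support_nodup.append hq'.of_cons fun x hxp hxq => ?_
  obtain rfl := h x hxp (q.cons_tail_support ▸ List.mem_cons_of_mem _ hxq)
  exact (List.nodup_cons.1 hq').1 hxq

open SimpleGraph

section Segments

variable {G : SimpleGraph V} {a b p q v : V}

theorem left_mem_seg (a b : V) : a ∈ Seg G a b := by simp [Seg]

theorem right_mem_seg (a b : V) : b ∈ Seg G a b := by simp [Seg]

theorem seg_comm (a b : V) : Seg G a b = Seg G b a := by
  ext v
  show G.dist a v + G.dist v b = G.dist a b ↔ G.dist b v + G.dist v a = G.dist b a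
  rw [G.dist_comm (u := a) (v := v), G.dist_comm (u := v) (v := b), G.dist_comm (u := a), add_comm]

theorem SimpleGraph.Connected.mem_seg_trans (hG : G.Connected) {m : V} (hq : q ∈ Seg G p m)
    (hm : m ∈ Seg G p v) : q ∈ Seg G p v := by
  have := hG.dist_triangle (u := q) (v := m) (w := v)
  have := hG.dist_triangle (u := p) (v := q) (w := v)
  simp only [Seg, Set.mem_ofPred_eq] at *
  omega

namespace SimpleGraph.IsTree

variable (hT : G.IsTree)
include hT

theorem eq_of_isPath {w w' : G.Walk a b} (hw : w.IsPath) (hw' : w'.IsPath) : w = w' :=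
  congrArg Subtype.val ((hT.isAcyclic.subsingleton_path a b).elim ⟨w, hw⟩ ⟨w', hw'⟩)

theorem length_eq_dist {w : G.Walk a b} (hw : w.IsPath) : w.length = G.dist a b := by
  obtain ⟨w', hw', hlen⟩ := hT.connected.exists_path_of_dist a b
  rw [← hlen, hT.eq_of_isPath hw hw']

theorem mem_seg_iff {w : G.Walk a b} (hw : w.IsPath) : v ∈ Seg G a b ↔ v ∈ w.support := by
  classical
  constructor
  · intro hv
    obtain ⟨w₁, -, h₁⟩ := hT.connected.exists_path_of_dist a v
    obtain ⟨w₂, -, h₂⟩ := hT.connected.exists_path_of_dist v b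
    have hpath : (w₁.append w₂).IsPath :=
      Walk.isPath_of_length_eq_dist _ (by rw [Walk.length_append, h₁, h₂]; exact hv)
    rw [hT.eq_of_isPath hw hpath]
    exact (Walk.mem_support_append_iff _ _).2 (Or.inr w₂.start_mem_support)
  · intro hv
    have hlen := congrArg Walk.length (w.take_spec hv)
    rwa [Walk.length_append, hT.length_eq_dist (hw.takeUntil hv),
      hT.length_eq_dist (hw.dropUntil hv), hT.length_eq_dist hw] at hlen

theorem seg_subset {a' b' : V} (ha' : a' ∈ Seg G a b) (hb' : b' ∈ Seg G a b) :
    Seg G a' b' ⊆ Seg G a b := by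
  classical
  obtain ⟨w, hw, -⟩ := hT.connected.exists_path_of_dist a b
  rw [hT.mem_seg_iff hw] at ha' hb'
  intro v hv
  rw [hT.mem_seg_iff hw, ← w.take_spec ha', Walk.mem_support_append_iff]
  rw [← w.take_spec ha', Walk.mem_support_append_iff] at hb'
  rcases hb' with hb' | hb'
  · rw [seg_comm, hT.mem_seg_iff ((hw.takeUntil ha').dropUntil hb')] at hv
    exact Or.inl (Walk.support_dropUntil_subset_support _ hb' hv)
  · rw [hT.mem_seg_iff ((hw.dropUntil ha').takeUntil hb')] at hv
    exact Or.inr (Walk.support_takeUntil_subset_support _ hb' hv)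

theorem mem_seg_of_closest_on_path {w : G.Walk a b} (hw : w.IsPath) (hq : q ∈ w.support)
    (hmin : ∀ y ∈ w.support, G.dist p q ≤ G.dist p y) : q ∈ Seg G p b := by
  classical
  obtain ⟨r, hr, hrlen⟩ := hT.connected.exists_path_of_dist p q
  have hpath : (r.append (w.dropUntil q hq)).IsPath := by
    refine hr.append_of_support_inter (hw.dropUntil hq) fun x hxr hxw => ?_
    have hx : G.dist p x + G.dist x q = G.dist p q := (hT.mem_seg_iff hr).2 hxr
    have := hmin x (Walk.support_dropUntil_subset_support _ hq hxw)
    exact (hT.connected.dist_eq_zero_iff).1 (by omega)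
  have hlen := hT.length_eq_dist hpath
  rwa [Walk.length_append, hrlen, hT.length_eq_dist (hw.dropUntil hq)] at hlen

theorem exists_median (p a b : V) :
    ∃ q, q ∈ Seg G p a ∧ q ∈ Seg G p b ∧ q ∈ Seg G a b := by
  classical
  obtain ⟨w, hw, -⟩ := hT.connected.exists_path_of_dist a b
  obtain ⟨q, hq, hmin⟩ := w.support.toFinset.exists_min_image (G.dist p)
    ⟨a, List.mem_toFinset.2 w.start_mem_support⟩
  rw [List.mem_toFinset] at hq
  have hmin' : ∀ y ∈ w.support, G.dist p q ≤ G.dist p y := fun y hy =>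
    hmin y (List.mem_toFinset.2 hy)
  have hq_rev : q ∈ w.reverse.support := by simpa [Walk.support_reverse] using hq
  have hmin_rev : ∀ y ∈ w.reverse.support, G.dist p q ≤ G.dist p y := by
    simpa [Walk.support_reverse] using hmin'
  exact ⟨q, hT.mem_seg_of_closest_on_path hw.reverse hq_rev hmin_rev,
    hT.mem_seg_of_closest_on_path hw hq hmin', (hT.mem_seg_iff hw).2 hq⟩

end SimpleGraph.IsTree

end Segments

section Gate

variable {G : SimpleGraph V}

def segHull (G : SimpleGraph V) (S : Set V) : Set V :=
  {v | ∀ a b, S ⊆ Seg G a b → v ∈ Seg G a b}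

theorem subset_segHull (S : Set V) : S ⊆ segHull G S := fun _ hv _ _ hS => hS hv

theorem segHull_mono {S T : Set V} (h : S ⊆ T) : segHull G S ⊆ segHull G T :=
  fun _ hv a b hTab => hv a b (h.trans hTab)

def IsGate (G : SimpleGraph V) (p : V) (S : Set V) (m : V) : Prop :=
  m ∈ segHull G S ∧ ∀ v ∈ S, m ∈ Seg G p v

theorem SimpleGraph.IsTree.exists_isGate (hT : G.IsTree) (p : V) {S : Set V} (hS : S.Finite)
    (hne : S.Nonempty) : ∃ m, IsGate G p S m := by
  induction S, hS using Set.Finite.induction_on with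
  | empty => exact absurd hne Set.not_nonempty_empty
  | @insert w S _ _ ih =>
    rcases S.eq_empty_or_nonempty with rfl | hS
    · refine ⟨w, subset_segHull _ (Set.mem_insert w ∅), ?_⟩
      simp [right_mem_seg]
    obtain ⟨m, hm_hull, hm_seg⟩ := ih hS
    obtain ⟨q, hq_pm, hq_pw, hq_mw⟩ := hT.exists_median p m w
    refine ⟨q, fun a b hab => ?_, ?_⟩
    · exact hT.seg_subset (hm_hull a b ((Set.subset_insert w S).trans hab))
        (hab (Set.mem_insert w S)) hq_mw
    · rintro v (rfl | hv)
      exacts [hq_pw, hT.connected.mem_seg_trans hq_pm (hm_seg v hv)]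

noncomputable def gate (G : SimpleGraph V) (p : V) {k : ℕ} (x : Fin k → V) : V :=
  haveI : Nonempty V := ⟨p⟩
  Classical.epsilon (IsGate G p (Set.range x))

theorem SimpleGraph.IsTree.isGate_gate (hT : G.IsTree) (p : V) {n : ℕ} (x : Fin (n + 1) → V) :
    IsGate G p (Set.range x) (gate G p x) :=
  haveI : Nonempty V := ⟨p⟩
  Classical.epsilon_spec (hT.exists_isGate p (Set.finite_range x) (Set.range_nonempty x))

theorem gate_comp_perm (p : V) {k : ℕ} (x : Fin k → V) (σ : Equiv.Perm (Fin k)) :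
    gate G p (x ∘ σ) = gate G p x := by
  simp only [gate, EquivLike.range_comp]

end Gate

namespace AltChain

variable {R : Type*} [CommRing R] (G : SimpleGraph V) (p : V)

noncomputable def homotopy (bnd : ∀ n : ℕ, AltChain V R (n + 1) →ₗ[R] AltChain V R n) :
    (n : ℕ) → AltChain V R n →ₗ[R] AltChain V R (n + 1)
  | 0 => cone p
  | n + 1 => ofAlternating
      (fun x => cone (gate G p x) (chainOf x - homotopy bnd n (bnd n (chainOf x))))
      fun x σ => by simp [gate_comp_perm, chainOf_comp_perm, smul_sub]

noncomputable def hullOrRaySpan {k : ℕ} (x : Fin k → V) (m : ℕ) : Submodule R (AltChain V R m) :=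
  Submodule.span R {c | ∃ z, (Set.range z ⊆ segHull G (Set.range x) ∨
    ∃ i, Set.range z ⊆ Seg G p (x i)) ∧ c = chainOf z}

variable {bnd : ∀ n : ℕ, AltChain V R (n + 1) →ₗ[R] AltChain V R n}

theorem homotopy_zero : homotopy G p bnd 0 = cone p := rfl

theorem homotopy_succ_chainOf {n : ℕ} (x : Fin (n + 2) → V) :
    homotopy G p bnd (n + 1) (chainOf x) =
      cone (gate G p x) (chainOf x - homotopy G p bnd n (bnd n (chainOf x))) :=
  ofAlternating_chainOf _ _ x

section Identities

variable (hbnd : IsFaceBoundary bnd) {eps : AltChain V R 0 →ₗ[R] R}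
  (heps : ∀ x : Fin 1 → V, eps (chainOf x) = 1)
include hbnd

include heps in
theorem bnd_homotopy_zero (c : AltChain V R 0) :
    bnd 0 (homotopy G p bnd 0 c) + eps c • chainOf (fun _ => p) = c := by
  rw [homotopy_zero, bnd_zero_cone hbnd heps, sub_add_cancel]

theorem bnd_homotopy_succ (n : ℕ)
    (hn : ∀ c, bnd n (homotopy G p bnd n (bnd n c)) = bnd n c) (c : AltChain V R (n + 1)) :
    bnd (n + 1) (homotopy G p bnd (n + 1) c) + homotopy G p bnd n (bnd n c) = c := by
  suffices (bnd (n + 1)).comp (homotopy G p bnd (n + 1)) + (homotopy G p bnd n).comp (bnd n) =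
      LinearMap.id from LinearMap.congr_fun this c
  refine hom_ext fun x => ?_
  rw [LinearMap.add_apply, LinearMap.comp_apply, LinearMap.comp_apply, homotopy_succ_chainOf,
    bnd_cone hbnd, map_sub (bnd n), hn, sub_self, map_zero, sub_zero, sub_add_cancel,
    LinearMap.id_apply]

include heps in
theorem bnd_homotopy (n : ℕ) (c : AltChain V R (n + 1)) :
    bnd (n + 1) (homotopy G p bnd (n + 1) c) + homotopy G p bnd n (bnd n c) = c := by
  induction n with
  | zero =>
    refine bnd_homotopy_succ G p hbnd 0 (fun c => ?_) c
    have := bnd_homotopy_zero G p hbnd heps (bnd 0 c)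
    rwa [eps_bnd_zero hbnd heps, zero_smul, add_zero] at this
  | succ n ih =>
    refine bnd_homotopy_succ G p hbnd (n + 1) (fun c => ?_) c
    have := ih (bnd (n + 1) c)
    rwa [bnd_bnd hbnd, map_zero, add_zero] at this

end Identities

section Alignment

variable {G p}

theorem chainOf_mem_hullOrRaySpan {n : ℕ} (x : Fin (n + 1) → V) :
    chainOf x ∈ hullOrRaySpan (R := R) G p x n :=
  Submodule.subset_span ⟨x, Or.inl (subset_segHull _), rfl⟩

theorem hullOrRaySpan_le_comap_cone {k l : ℕ} {x : Fin k → V} {y : Fin l → V} {g : V}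
    (hg : IsGate G p (Set.range x) g) (hy : Set.range y ⊆ Set.range x) (n : ℕ) :
    hullOrRaySpan (R := R) G p y n ≤ (hullOrRaySpan G p x (n + 1)).comap (cone g) := by
  refine Submodule.span_le.2 ?_
  rintro _ ⟨z, hz, rfl⟩
  refine Submodule.subset_span ⟨Fin.cons g z, ?_, cone_chainOf g z⟩
  rw [Fin.range_cons]
  rcases hz with hz | ⟨i, hz⟩
  · exact Or.inl (Set.insert_subset hg.1 (hz.trans (segHull_mono hy)))
  · obtain ⟨j, hj⟩ := hy ⟨i, rfl⟩
    exact Or.inr ⟨j, Set.insert_subset (hg.2 _ ⟨j, rfl⟩) (hj ▸ hz)⟩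

theorem hullOrRaySpan_le_alignedSub {n : ℕ} {x : Fin n → V} (hx : Aligned G x) (m : ℕ) :
    hullOrRaySpan (R := R) G p x m ≤ alignedSub G R m := by
  refine Submodule.span_le.2 ?_
  rintro _ ⟨z, hz, rfl⟩
  refine Submodule.subset_span ⟨z, ?_, rfl⟩
  rcases hz with hz | ⟨i, hz⟩
  · obtain ⟨a, b, hab⟩ := hx
    exact ⟨a, b, fun k => hz ⟨k, rfl⟩ a b (Set.range_subset_iff.2 hab)⟩
  · exact ⟨p, x i, fun k => hz ⟨k, rfl⟩⟩

theorem homotopy_chainOf_mem_hullOrRaySpan (hbnd : IsFaceBoundary bnd) (hT : G.IsTree) :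
    ∀ (n : ℕ) (x : Fin (n + 1) → V), homotopy G p bnd n (chainOf x) ∈ hullOrRaySpan G p x (n + 1)
  | 0, x => by
    refine Submodule.subset_span ⟨Fin.cons p x, Or.inr ⟨0, ?_⟩, cone_chainOf p x⟩
    rw [Fin.range_cons, Set.insert_subset_iff, Set.range_subset_iff]
    exact ⟨left_mem_seg _ _, fun i => by rw [Subsingleton.elim i 0]; exact right_mem_seg _ _⟩
  | n + 1, x => by
    have hg := hT.isGate_gate p x
    rw [homotopy_succ_chainOf, ← Submodule.mem_comap]
    refine Submodule.sub_mem _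
      (hullOrRaySpan_le_comap_cone hg subset_rfl _ (chainOf_mem_hullOrRaySpan x)) ?_
    rw [hbnd, map_sum]
    refine Submodule.sum_mem _ fun j _ => ?_
    rw [map_smul]
    exact Submodule.smul_mem _ _ (hullOrRaySpan_le_comap_cone hg (Set.range_comp_subset_range _ _) _
      (homotopy_chainOf_mem_hullOrRaySpan hbnd hT n _))

theorem homotopy_mem_alignedSub (hbnd : IsFaceBoundary bnd) (hT : G.IsTree) (n : ℕ)
    {c : AltChain V R n} (hc : c ∈ alignedSub G R n) :
    homotopy G p bnd n c ∈ alignedSub G R (n + 1) := by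
  refine (Submodule.span_le (p := (alignedSub G R (n + 1)).comap _)).2 ?_ hc
  rintro _ ⟨x, hx, rfl⟩
  exact hullOrRaySpan_le_alignedSub hx _ (homotopy_chainOf_mem_hullOrRaySpan hbnd hT n x)

end Alignment

end AltChain

namespace Finsupp

variable {α : Type*}

noncomputable def l1Norm (f : α →₀ ℝ) : ℝ := ∑ x ∈ f.support, |f x|

theorem l1Norm_eq_sum_of_support_subset {f : α →₀ ℝ} {s : Finset α} (hs : f.support ⊆ s) :
    l1Norm f = ∑ x ∈ s, |f x| :=
  Finset.sum_subset hs fun x _ hx => by rw [notMem_support_iff.1 hx, abs_zero]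

theorem l1Norm_add_le (f g : α →₀ ℝ) : l1Norm (f + g) ≤ l1Norm f + l1Norm g := by
  classical
  rw [l1Norm_eq_sum_of_support_subset support_add,
    l1Norm_eq_sum_of_support_subset (s := f.support ∪ g.support) Finset.subset_union_left,
    l1Norm_eq_sum_of_support_subset (s := f.support ∪ g.support) Finset.subset_union_right,
    ← Finset.sum_add_distrib]
  exact Finset.sum_le_sum fun x _ => abs_add_le (f x) (g x)

theorem l1Norm_smul (r : ℝ) (f : α →₀ ℝ) : l1Norm (r • f) = |r| * l1Norm f := by
  rw [l1Norm_eq_sum_of_support_subset support_smul, l1Norm, Finset.mul_sum]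
  simp [abs_mul]

theorem l1Norm_single (a : α) (r : ℝ) : l1Norm (single a r) = |r| := by
  rw [l1Norm_eq_sum_of_support_subset support_single_subset, Finset.sum_singleton,
    single_eq_same]

end Finsupp

section QuotientNorm

variable {n m : ℕ}

theorem cnorm_mk_le (f : (Fin (n + 1) → V) →₀ ℝ) :
    cnorm (Submodule.Quotient.mk f : AltChain V ℝ n) ≤ l1Norm f :=
  csInf_le ⟨0, by rintro _ ⟨g, -, rfl⟩; exact Finset.sum_nonneg fun _ _ => abs_nonneg _⟩
    ⟨f, rfl, rfl⟩

theorem le_cnorm {c : AltChain V ℝ n} {r : ℝ}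
    (h : ∀ f, (Submodule.Quotient.mk f : AltChain V ℝ n) = c → r ≤ l1Norm f) : r ≤ cnorm c :=
  have ⟨f, hf⟩ := Submodule.Quotient.mk_surjective _ c
  le_csInf ⟨_, f, hf, rfl⟩ (by rintro _ ⟨f, hf, rfl⟩; exact h f hf)

theorem le_mul_cnorm {c : AltChain V ℝ n} {r C : ℝ} (hC : 0 < C)
    (h : ∀ f, (Submodule.Quotient.mk f : AltChain V ℝ n) = c → r ≤ C * l1Norm f) :
    r ≤ C * cnorm c := by
  rw [← div_le_iff₀' hC]
  exact le_cnorm fun f hf => by rw [div_le_iff₀' hC]; exact h f hf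

theorem cnorm_add_le (c d : AltChain V ℝ n) : cnorm (c + d) ≤ cnorm c + cnorm d := by
  rw [← sub_le_iff_le_add]
  refine le_cnorm fun f hf => ?_
  rw [sub_le_comm]
  refine le_cnorm fun g hg => ?_
  have := cnorm_mk_le (f + g)
  rw [Submodule.Quotient.mk_add, hf, hg] at this
  linarith [l1Norm_add_le f g]

theorem cnorm_smul_le (r : ℝ) (c : AltChain V ℝ n) : cnorm (r • c) ≤ |r| * cnorm c := by
  rcases eq_or_ne r 0 with rfl | hr
  · simpa [l1Norm] using cnorm_mk_le (0 : (Fin (n + 1) → V) →₀ ℝ)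
  refine le_mul_cnorm (abs_pos.2 hr) fun f hf => ?_
  rw [← l1Norm_smul, ← hf, ← Submodule.Quotient.mk_smul]
  exact cnorm_mk_le _

theorem cnorm_sub_le (c d : AltChain V ℝ n) : cnorm (c - d) ≤ cnorm c + cnorm d := by
  rw [sub_eq_add_neg, ← neg_one_smul ℝ d]
  refine (cnorm_add_le _ _).trans (add_le_add le_rfl ?_)
  simpa using cnorm_smul_le (-1) d

theorem cnorm_sum_le {ι : Type*} (s : Finset ι) (c : ι → AltChain V ℝ n) :
    cnorm (∑ i ∈ s, c i) ≤ ∑ i ∈ s, cnorm (c i) :=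
  Finset.le_sum_of_subadditive cnorm (by simpa [l1Norm] using cnorm_mk_le 0) cnorm_add_le s c

theorem cnorm_chainOf_le (x : Fin (n + 1) → V) : cnorm (chainOf (R := ℝ) x) ≤ 1 :=
  (cnorm_mk_le (single x 1)).trans (by rw [l1Norm_single, abs_one])

theorem cnorm_map_le_of_chainOf (L : AltChain V ℝ n →ₗ[ℝ] AltChain V ℝ m) {C : ℝ} (hC : 0 < C)
    (hL : ∀ x, cnorm (L (chainOf x)) ≤ C) (c : AltChain V ℝ n) : cnorm (L c) ≤ C * cnorm c := by
  refine le_mul_cnorm hC fun f hf => ?_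
  rw [← hf, AltChain.mk_eq_sum, map_sum, l1Norm, Finset.mul_sum]
  refine (cnorm_sum_le _ _).trans (Finset.sum_le_sum fun x _ => ?_)
  rw [map_smul, mul_comm]
  exact (cnorm_smul_le _ _).trans (mul_le_mul_of_nonneg_left (hL x) (abs_nonneg _))

theorem cnorm_cone_le (a : V) (c : AltChain V ℝ n) : cnorm (AltChain.cone a c) ≤ cnorm c := by
  simpa using cnorm_map_le_of_chainOf (AltChain.cone a) one_pos
    (fun x => by rw [AltChain.cone_chainOf]; exact cnorm_chainOf_le _) c

variable {bnd : ∀ n : ℕ, AltChain V ℝ (n + 1) →ₗ[ℝ] AltChain V ℝ n}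
  (hbnd : AltChain.IsFaceBoundary bnd)
include hbnd

theorem cnorm_bnd_chainOf_le (y : Fin (n + 2) → V) : cnorm (bnd n (chainOf y)) ≤ n + 2 := by
  rw [hbnd]
  refine (cnorm_sum_le _ _).trans ?_
  calc ∑ j : Fin (n + 2), cnorm (((-1 : ℝ) ^ (j : ℕ)) • chainOf (y ∘ Fin.succAbove j))
      ≤ ∑ _j : Fin (n + 2), (1 : ℝ) := Finset.sum_le_sum fun j _ =>
        (cnorm_smul_le _ _).trans (by rw [abs_neg_one_pow, one_mul]; exact cnorm_chainOf_le _)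
    _ = n + 2 := by simp

theorem exists_cnorm_homotopy_le (G : SimpleGraph V) (p : V) :
    ∀ n, ∃ C > 0, ∀ c, cnorm (AltChain.homotopy G p bnd n c) ≤ C * cnorm c
  | 0 => ⟨1, one_pos, fun c => by simpa [AltChain.homotopy_zero] using cnorm_cone_le p c⟩
  | n + 1 => by
    obtain ⟨C, hC, hbound⟩ := exists_cnorm_homotopy_le G p n
    refine ⟨1 + (n + 2) * C, by positivity,
      cnorm_map_le_of_chainOf _ (by positivity) fun x => ?_⟩
    rw [AltChain.homotopy_succ_chainOf]
    calc _ ≤ cnorm (chainOf x - AltChain.homotopy G p bnd n (bnd n (chainOf x))) :=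
          cnorm_cone_le _ _
      _ ≤ 1 + C * (n + 2) := (cnorm_sub_le _ _).trans (add_le_add (cnorm_chainOf_le x)
          ((hbound _).trans (mul_le_mul_of_nonneg_left (cnorm_bnd_chainOf_le hbnd x) hC.le)))
      _ = 1 + (n + 2) * C := by ring

end QuotientNorm

/-- Let `T` be a non-empty simplicial tree. The augmented complex
`0 ← ℝ ←(ε) A₀(T,ℝ) ←(∂) A₁(T,ℝ) ←(∂) A₂(T,ℝ) ← ⋯` admits a bounded contracting
homotopy: bounded linear maps `s : ℝ → A₀(T,ℝ)` and `h_n : A_n(T,ℝ) → A_{n+1}(T,ℝ)`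
with `ε∘s = id`, `∂∘h₀ + s∘ε = id` on `A₀(T,ℝ)` and `∂∘h_n + h_{n−1}∘∂ = id` on
`A_n(T,ℝ)` for `n ≥ 1`. The boundaries `∂` are characterised on tuples as the
alternating sums of the faces, and the augmentation `ε` by `ε(x₀) = 1`; the maps `h_n`
are given as (linear extensions of) maps defined on `A_n(T,ℝ)`, and all conditions are
required on `A_n(T,ℝ)` with the ℓ¹-quotient norm. -/
theorem statement12 (G : SimpleGraph V) [Nonempty V] (hT : G.IsTree)
    (bnd : ∀ n : ℕ, AltChain V ℝ (n + 1) →ₗ[ℝ] AltChain V ℝ n)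
    (hbnd : ∀ (n : ℕ) (y : Fin (n + 2) → V),
      bnd n (chainOf y) =
        ∑ j : Fin (n + 2), ((-1 : ℝ) ^ (j : ℕ)) • chainOf (y ∘ Fin.succAbove j))
    (eps : AltChain V ℝ 0 →ₗ[ℝ] ℝ)
    (heps : ∀ x : Fin 1 → V, eps (chainOf x) = 1) :
    ∃ (s : ℝ →ₗ[ℝ] AltChain V ℝ 0) (h : ∀ n : ℕ, AltChain V ℝ n →ₗ[ℝ] AltChain V ℝ (n + 1)),
      -- `s` and the `h_n` are bounded
      (∃ C : ℝ, ∀ r : ℝ, cnorm (s r) ≤ C * |r|) ∧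
      (∀ n : ℕ, ∃ C : ℝ, ∀ c ∈ alignedSub G ℝ n, cnorm (h n c) ≤ C * cnorm c) ∧
      -- `s` and the `h_n` take values in the aligned chains
      (∀ r : ℝ, s r ∈ alignedSub G ℝ 0) ∧
      (∀ n : ℕ, ∀ c ∈ alignedSub G ℝ n, h n c ∈ alignedSub G ℝ (n + 1)) ∧
      -- `ε ∘ s = id`
      (∀ r : ℝ, eps (s r) = r) ∧
      -- `∂ ∘ h₀ + s ∘ ε = id` on `A₀(T,ℝ)`
      (∀ c ∈ alignedSub G ℝ 0, bnd 0 (h 0 c) + s (eps c) = c) ∧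
      -- `∂ ∘ h_n + h_{n−1} ∘ ∂ = id` on `A_n(T,ℝ)` for `n ≥ 1`
      (∀ n : ℕ, ∀ c ∈ alignedSub G ℝ (n + 1),
        bnd (n + 1) (h (n + 1) c) + h n (bnd n c) = c) := by
  obtain ⟨p⟩ := ‹Nonempty V›
  refine ⟨LinearMap.toSpanSingleton ℝ _ (chainOf fun _ => p), AltChain.homotopy G p bnd,
    ⟨1, fun r => ?_⟩, fun n => ?_, fun r => ?_, fun n c hc => ?_, fun r => ?_,
    fun c _ => ?_, fun n c _ => ?_⟩
  · simpa [mul_comm] using (cnorm_smul_le r _).trans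
      (mul_le_mul_of_nonneg_left (cnorm_chainOf_le _) (abs_nonneg r))
  · obtain ⟨C, -, hC⟩ := exists_cnorm_homotopy_le hbnd G p n
    exact ⟨C, fun c _ => hC c⟩
  · exact Submodule.smul_mem _ r (Submodule.subset_span ⟨_, ⟨p, p, fun _ => left_mem_seg p p⟩, rfl⟩)
  · exact AltChain.homotopy_mem_alignedSub hbnd hT n hc
  · simp [heps]
  · exact AltChain.bnd_homotopy_zero G p hbnd heps c
  · exact AltChain.bnd_homotopy G p hbnd heps n c
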